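/- Let θ₀, s, G > 0, let X̃ ~ Exp(θ₀) and T̃ ~ Uniform[0,G] be independent, and let α(·) be the selection-probability function with derivative α'. Then the score has mean zero at the true parameter: E[ 1_{T̃ ≤ X̃ ≤ T̃ + s} · ( X̃ − 1/θ₀ + α'(θ₀)/α(θ₀) ) ] = 0. -/

import Mathlib

open MeasureTheory ProbabilityTheory Real Set Filter

/-- The uniform probability measure on the interval `[0, G]`. -/
noncomputable def uniformMeasure (G : ℝ) : Measure ℝ :=
  (ENNReal.ofReal G)⁻¹ • (volume.restrict (Set.Icc 0 G))

/-- The selection probability function `α(θ) = (1 − e^{−θs})(1 − e^{−Gθ})/(Gθ)`. -/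
noncomputable def alphaFun (s G θ : ℝ) : ℝ :=
  (1 - exp (-(θ * s))) * (1 - exp (-(G * θ))) / (G * θ)

/-! By independence the expectation is an iterated integral against the product of the laws of
`T̃` and `X̃`. For fixed `t ≥ 0`, integrating `x − 1/θ + a` against the exponential density over
`[t, t + s]` gives `φ t − φ (t + s)` with `φ y = (y + a) e^{−θy}`, and averaging over
`t ∈ [0, G]` leaves an explicit expression in `e^{−θs}` and `e^{−Gθ}`. It vanishes because
`a = α'/α` is the logarithmic derivative
`s e^{−θs}/(1 − e^{−θs}) + G e^{−Gθ}/(1 − e^{−Gθ}) − 1/θ`. -/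

lemma isProbabilityMeasure_uniformMeasure {G : ℝ} (hG : 0 < G) :
    IsProbabilityMeasure (uniformMeasure G) := by
  constructor
  rw [uniformMeasure, Measure.smul_apply, Measure.restrict_apply_univ, Real.volume_Icc, sub_zero,
    smul_eq_mul]
  exact ENNReal.inv_mul_cancel (by simpa using hG) ENNReal.ofReal_ne_top

lemma ae_mem_Icc_uniformMeasure (G : ℝ) : ∀ᵐ t ∂uniformMeasure G, t ∈ Icc 0 G := by
  rw [uniformMeasure]
  exact (ae_restrict_mem measurableSet_Icc).filter_mono (Measure.ae_smul_measure_le _)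

lemma integral_uniformMeasure {G : ℝ} (hG : 0 ≤ G) (f : ℝ → ℝ) :
    ∫ t, f t ∂uniformMeasure G = G⁻¹ * ∫ t in 0..G, f t := by
  rw [uniformMeasure, integral_smul_measure, ENNReal.toReal_inv, ENNReal.toReal_ofReal hG,
    integral_Icc_eq_integral_Ioc, intervalIntegral.integral_of_le hG, smul_eq_mul]

lemma setIntegral_Icc_expMeasure {θ a b : ℝ} (hθ : 0 < θ) (ha : 0 ≤ a) (hab : a ≤ b)
    (f : ℝ → ℝ) :
    ∫ x in Icc a b, f x ∂expMeasure θ = ∫ x in a..b, θ * exp (-(θ * x)) * f x := by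
  rw [intervalIntegral.integral_of_le hab, ← integral_Icc_eq_integral_Ioc, expMeasure,
    gammaMeasure, setIntegral_withDensity_eq_setIntegral_toReal_smul (f := gammaPDF 1 θ)
      (measurable_gammaPDFReal 1 θ).ennreal_ofReal (ae_of_all _ fun _ => ENNReal.ofReal_lt_top)
      f measurableSet_Icc]
  refine setIntegral_congr_fun measurableSet_Icc fun x hx => ?_
  rw [gammaPDF, ENNReal.toReal_ofReal (gammaPDFReal_nonneg one_pos hθ x), gammaPDFReal,
    if_pos (ha.trans hx.1)]
  simp

lemma hasDerivAt_antideriv_add_mul_exp_neg_mul {θ : ℝ} (hθ : θ ≠ 0) (a x : ℝ) :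
    HasDerivAt (fun t => -((t + a) / θ + 1 / θ ^ 2) * exp (-(θ * t)))
      ((x + a) * exp (-(θ * x))) x := by
  have hpoly : HasDerivAt (fun t => -((t + a) / θ + 1 / θ ^ 2)) (-(1 / θ)) x :=
    ((((hasDerivAt_id x).add_const a).div_const θ).add_const _).neg
  have hexp : HasDerivAt (fun t => exp (-(θ * t))) (exp (-(θ * x)) * -(θ * 1)) x :=
    ((hasDerivAt_id x).const_mul θ).neg.exp
  refine (hpoly.mul hexp).congr_deriv ?_
  field_simp
  ring

lemma integral_add_mul_exp_neg_mul {θ : ℝ} (hθ : θ ≠ 0) (a l u : ℝ) :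
    ∫ x in l..u, (x + a) * exp (-(θ * x)) =
      ((l + a) / θ + 1 / θ ^ 2) * exp (-(θ * l)) - ((u + a) / θ + 1 / θ ^ 2) * exp (-(θ * u)) := by
  rw [intervalIntegral.integral_eq_sub_of_hasDerivAt
    (fun x _ => hasDerivAt_antideriv_add_mul_exp_neg_mul hθ a x)
    (Continuous.intervalIntegrable (by fun_prop) _ _)]
  ring

lemma integral_exp_density_mul_sub_mean_add {θ : ℝ} (hθ : θ ≠ 0) (a l u : ℝ) :
    ∫ x in l..u, θ * exp (-(θ * x)) * (x - 1 / θ + a) =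
      (l + a) * exp (-(θ * l)) - (u + a) * exp (-(θ * u)) := by
  have hintegrand : (fun x => θ * exp (-(θ * x)) * (x - 1 / θ + a)) =
      fun x => θ * ((x + (a - 1 / θ)) * exp (-(θ * x))) := by
    funext x; ring
  rw [hintegrand, intervalIntegral.integral_const_mul, integral_add_mul_exp_neg_mul hθ]
  field_simp
  ring

def selectionWindow (s : ℝ) : Set (ℝ × ℝ) := {p | p.1 ≤ p.2 ∧ p.2 ≤ p.1 + s}

lemma measurableSet_selectionWindow (s : ℝ) : MeasurableSet (selectionWindow s) :=
  (measurableSet_le measurable_fst measurable_snd).inter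
    (measurableSet_le measurable_snd (measurable_fst.add_const s))

lemma integrableOn_selectionWindow_uniformMeasure_prod {G : ℝ} (hG : 0 < G) (s : ℝ)
    (μ : Measure ℝ) [IsFiniteMeasure μ] {f : ℝ → ℝ} (hf : Continuous f) :
    IntegrableOn (fun p : ℝ × ℝ => f p.2) (selectionWindow s) ((uniformMeasure G).prod μ) := by
  have := isProbabilityMeasure_uniformMeasure hG
  obtain ⟨C, hC⟩ := isCompact_Icc.exists_bound_of_continuousOn (s := Icc 0 (G + s)) hf.continuousOn
  have hfst : ∀ᵐ p ∂(uniformMeasure G).prod μ, p.1 ∈ Icc 0 G :=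
    Measure.QuasiMeasurePreserving.ae (Measure.quasiMeasurePreserving_fst)
      (ae_mem_Icc_uniformMeasure G)
  refine Measure.integrableOn_of_bounded (M := C) (measure_ne_top _ _)
    (hf.comp continuous_snd).aestronglyMeasurable ?_
  filter_upwards [ae_restrict_of_ae hfst, ae_restrict_mem (measurableSet_selectionWindow s)]
    with p hp hpS
  exact hC p.2 ⟨hp.1.trans hpS.1, hpS.2.trans (by linarith [hp.2])⟩

lemma setIntegral_selectionWindow_eq_integral_setIntegral {Ω : Type*} [MeasurableSpace Ω]
    {P : Measure Ω} [IsFiniteMeasure P] {X T : Ω → ℝ} (hX : Measurable X) (hT : Measurable T)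
    (hindep : IndepFun X T P) {s : ℝ} {f : ℝ → ℝ} (hf : Measurable f)
    (hint : IntegrableOn (fun p : ℝ × ℝ => f p.2) (selectionWindow s) ((P.map T).prod (P.map X))) :
    ∫ ω in {ω | T ω ≤ X ω ∧ X ω ≤ T ω + s}, f (X ω) ∂P =
      ∫ t, ∫ x in Icc t (t + s), f x ∂P.map X ∂P.map T := by
  have hjoint : P.map (fun ω => (T ω, X ω)) = (P.map T).prod (P.map X) :=
    (indepFun_iff_map_prod_eq_prod_map_map hT.aemeasurable hX.aemeasurable).mp hindep.symm
  calc ∫ ω in {ω | T ω ≤ X ω ∧ X ω ≤ T ω + s}, f (X ω) ∂P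
      = ∫ p in selectionWindow s, f p.2 ∂P.map (fun ω => (T ω, X ω)) :=
        (setIntegral_map (measurableSet_selectionWindow s)
          (hf.comp measurable_snd).aestronglyMeasurable (hT.prodMk hX).aemeasurable).symm
    _ = ∫ p, (selectionWindow s).indicator (fun p => f p.2) p ∂(P.map T).prod (P.map X) := by
        rw [hjoint, integral_indicator (measurableSet_selectionWindow s)]
    _ = ∫ t, ∫ x, (Icc t (t + s)).indicator f x ∂P.map X ∂P.map T :=
        integral_prod _ (hint.integrable_indicator (measurableSet_selectionWindow s))
    _ = ∫ t, ∫ x in Icc t (t + s), f x ∂P.map X ∂P.map T := by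
        simp_rw [integral_indicator measurableSet_Icc]

lemma one_sub_exp_neg_mul_ne_zero {x y : ℝ} (hx : x ≠ 0) (hy : y ≠ 0) : 1 - exp (-(x * y)) ≠ 0 := by
  rw [sub_ne_zero, ne_comm, Ne, exp_eq_one_iff, neg_eq_zero]
  exact mul_ne_zero hx hy

lemma deriv_alphaFun_div_alphaFun {s G θ : ℝ} (hs : s ≠ 0) (hG : G ≠ 0) (hθ : θ ≠ 0) :
    deriv (alphaFun s G) θ / alphaFun s G θ =
      s * exp (-(θ * s)) / (1 - exp (-(θ * s))) + G * exp (-(G * θ)) / (1 - exp (-(G * θ)))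
        - 1 / θ := by
  have hu := one_sub_exp_neg_mul_ne_zero hθ hs
  have hv := one_sub_exp_neg_mul_ne_zero hG hθ
  have h₁ : HasDerivAt (fun θ => 1 - exp (-(θ * s))) (s * exp (-(θ * s))) θ := by
    refine (((hasDerivAt_id θ).mul_const s).neg.exp.const_sub 1).congr_deriv ?_
    simp [mul_comm]
  have h₂ : HasDerivAt (fun θ => 1 - exp (-(G * θ))) (G * exp (-(G * θ))) θ := by
    refine (((hasDerivAt_id θ).const_mul G).neg.exp.const_sub 1).congr_deriv ?_
    simp [mul_comm]
  have h₃ : HasDerivAt (fun θ => G * θ) G θ := by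
    simpa using (hasDerivAt_id θ).const_mul G
  have hα : HasDerivAt (alphaFun s G) _ θ := (h₁.mul h₂).div h₃ (mul_ne_zero hG hθ)
  rw [hα.deriv, alphaFun, Pi.mul_apply]
  generalize exp (-(θ * s)) = u at hu ⊢
  generalize exp (-(G * θ)) = v at hv ⊢
  field_simp

lemma integral_add_mul_exp_neg_mul_sub_shift_eq_zero {s G θ : ℝ} (hs : s ≠ 0) (hG : G ≠ 0)
    (hθ : θ ≠ 0) :
    ∫ t in 0..G, ((t + deriv (alphaFun s G) θ / alphaFun s G θ) * exp (-(θ * t)) -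
        (t + s + deriv (alphaFun s G) θ / alphaFun s G θ) * exp (-(θ * (t + s)))) = 0 := by
  set a := deriv (alphaFun s G) θ / alphaFun s G θ with ha
  have hshift := intervalIntegral.integral_comp_add_right (a := 0) (b := G)
    (fun t => (t + a) * exp (-(θ * t))) s
  rw [intervalIntegral.integral_sub (Continuous.intervalIntegrable (by fun_prop) _ _)
      (Continuous.intervalIntegrable (by fun_prop) _ _), hshift,
    integral_add_mul_exp_neg_mul hθ, integral_add_mul_exp_neg_mul hθ, ha,
    deriv_alphaFun_div_alphaFun hs hG hθ, show -(θ * (G + s)) = -(G * θ) + -(θ * s) by ring, exp_add, mul_comm θ G]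
  simp only [zero_add, mul_zero, neg_zero, exp_zero]
  have hu := one_sub_exp_neg_mul_ne_zero hθ hs
  have hv := one_sub_exp_neg_mul_ne_zero hG hθ
  generalize exp (-(θ * s)) = u at hu ⊢
  generalize exp (-(G * θ)) = v at hv ⊢
  field_simp
  ring

/-- The score has mean zero at the true parameter:
`E[1_{T̃ ≤ X̃ ≤ T̃ + s}·(X̃ − 1/θ₀ + α'(θ₀)/α(θ₀))] = 0`. -/
theorem score_mean_zero
    {Ω : Type*} [MeasurableSpace Ω] (P : Measure Ω) [IsProbabilityMeasure P]
    (θ₀ s G : ℝ) (hθ₀ : 0 < θ₀) (hs : 0 < s) (hG : 0 < G)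
    (X T : Ω → ℝ) (hX : Measurable X) (hT : Measurable T)
    (hXlaw : P.map X = expMeasure θ₀)
    (hTlaw : P.map T = uniformMeasure G)
    (hindep : IndepFun X T P) :
    ∫ ω in {ω | T ω ≤ X ω ∧ X ω ≤ T ω + s},
        (X ω - 1 / θ₀ + deriv (alphaFun s G) θ₀ / alphaFun s G θ₀) ∂P = 0 := by
  have := isProbabilityMeasure_expMeasure hθ₀
  set a := deriv (alphaFun s G) θ₀ / alphaFun s G θ₀
  have hscore : Continuous fun x => x - 1 / θ₀ + a := by fun_prop
  have hint := integrableOn_selectionWindow_uniformMeasure_prod hG s (expMeasure θ₀) hscore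
  rw [← hXlaw, ← hTlaw] at hint
  rw [setIntegral_selectionWindow_eq_integral_setIntegral hX hT hindep hscore.measurable hint,
    hXlaw, hTlaw, integral_uniformMeasure hG.le]
  have hinner : EqOn (fun t => ∫ x in Icc t (t + s), (x - 1 / θ₀ + a) ∂expMeasure θ₀)
      (fun t => (t + a) * exp (-(θ₀ * t)) - (t + s + a) * exp (-(θ₀ * (t + s)))) (uIcc 0 G) := by
    intro t ht
    rw [uIcc_of_le hG.le] at ht
    dsimp only
    rw [setIntegral_Icc_expMeasure hθ₀ ht.1 (by linarith),
      integral_exp_density_mul_sub_mean_add hθ₀.ne']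
  rw [intervalIntegral.integral_congr hinner,
    integral_add_mul_exp_neg_mul_sub_shift_eq_zero hs.ne' hG.ne' hθ₀.ne', mul_zero]
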